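/- Let E ⊇ F ⊇ T be quasi-normed linear spaces with E complete, and suppose there exist C > 0 and β > 0 such that for all f ∈ F and t > 0 the Jackson-type inequality t^β · E(t, f) ≤ C‖f‖_F holds, where E(t, f) = inf{‖f - g‖_E : g ∈ T, ‖g‖_T ≤ t}. Then for 0 < θ < 1 and 0 < q ≤ ∞, the interpolation space (E, F)^K_{θ,q} embeds continuously into the approximation space E_{θβ, q}(E, T) defined by the quasi-norm (∫_0^∞ (t^{θβ}E(t, f))^q dt/t)^{1/q}. -/

import Mathlib

open MeasureTheory Set
open scoped ENNReal

lemma my_cov {β : ℝ} (hβ : 0 < β) (g : ℝ → ℝ≥0∞) :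
    ∫⁻ s in Ioi (0:ℝ), g s =
      ∫⁻ t in Ioi (0:ℝ), ENNReal.ofReal (β * t ^ (-β - 1)) * g (t ^ (-β)) := by
  have himg : (fun t : ℝ => t ^ (-β)) '' Ioi 0 = Ioi 0 := by
    apply Subset.antisymm
    · rintro s ⟨t, ht, rfl⟩
      exact Real.rpow_pos_of_pos ht _
    · intro s hs
      refine ⟨s ^ (-β⁻¹), Real.rpow_pos_of_pos hs _, ?_⟩
      show (s ^ (-β⁻¹)) ^ (-β) = s
      rw [← Real.rpow_mul (le_of_lt hs)]
      rw [show (-β⁻¹) * (-β) = 1 by field_simp]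
      exact Real.rpow_one s
  have hderiv : ∀ x ∈ Ioi (0:ℝ), HasFDerivWithinAt (fun t : ℝ => t ^ (-β))
      ((1 : ℝ →L[ℝ] ℝ).smulRight (-β * x ^ (-β - 1))) (Ioi 0) x := by
    intro x hx
    exact ((Real.hasDerivAt_rpow_const (p := -β) (Or.inl (ne_of_gt hx))).hasDerivWithinAt).hasFDerivWithinAt
  have hinj : InjOn (fun t : ℝ => t ^ (-β)) (Ioi 0) :=
    Set.InjOn.mono (fun y (hy : y ∈ Ioi (0:ℝ)) => (le_of_lt hy : (0:ℝ) ≤ y)) (Real.rpow_left_injOn (by linarith : -β ≠ 0))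
  calc ∫⁻ s in Ioi (0:ℝ), g s
      = ∫⁻ s in (fun t : ℝ => t ^ (-β)) '' Ioi 0, g s := by rw [himg]
    _ = ∫⁻ t in Ioi (0:ℝ),
        ENNReal.ofReal |((1 : ℝ →L[ℝ] ℝ).smulRight (-β * t ^ (-β - 1))).det| * g (t ^ (-β)) :=
        lintegral_image_eq_lintegral_abs_det_fderiv_mul volume measurableSet_Ioi hderiv hinj g
    _ = ∫⁻ t in Ioi (0:ℝ), ENNReal.ofReal (β * t ^ (-β - 1)) * g (t ^ (-β)) := by
        refine setLIntegral_congr_fun measurableSet_Ioi (fun t ht => ?_)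
        congr 2
        rw [ContinuousLinearMap.det_smulRight, ContinuousLinearMap.one_apply, one_mul, abs_of_nonpos, neg_mul]
        · ring
        · have := Real.rpow_nonneg (le_of_lt ht) (-β - 1)
          nlinarith

/-- Direct half of the equivalence between interpolation and approximation spaces
(Theorem 6.2): for quasi-normed spaces `T ⊆ F ⊆ E` with `E` complete, if the
Jackson-type inequality `t^β E(t,f) ≤ C ‖f‖_F` holds for all `f ∈ F`, `t > 0`,
where `E(t,f) = inf {‖f-g‖_E : g ∈ T, ‖g‖_T ≤ t}`, then `(E,F)^K_{θ,q}` embeds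
continuously into the approximation space `E_{θβ,q}(E,T)`: there is `c > 0` with
`(∫₀^∞ (t^{θβ} E(t,f))^q dt/t)^{1/q} ≤ c (∫₀^∞ (t^{-θ} K(f,t))^q dt/t)^{1/q}`
for `0 < q < ∞` (with the corresponding sup form for `q = ∞`). -/
theorem stmt_19 {A : Type*} [AddCommGroup A] [Module ℝ A]
    (qE : A → ℝ) (CE : ℝ) (hCE : 1 ≤ CE)
    (hqE0 : ∀ x, 0 ≤ qE x) (hqEzero : qE 0 = 0) (hqEneg : ∀ x, qE (-x) = qE x)
    (hqEtri : ∀ x y, qE (x + y) ≤ CE * (qE x + qE y))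
    -- completeness of `E` with respect to the quasi-norm `qE`
    (hEcomplete : ∀ u : ℕ → A,
      (∀ ε : ℝ, 0 < ε → ∃ N : ℕ, ∀ p n : ℕ, N ≤ p → N ≤ n → qE (u p - u n) < ε) →
      ∃ l : A, ∀ ε : ℝ, 0 < ε → ∃ N : ℕ, ∀ n : ℕ, N ≤ n → qE (u n - l) < ε)
    (F T : Submodule ℝ A) (hTF : T ≤ F)
    (qF : A → ℝ) (hqF0 : ∀ x, 0 ≤ qF x) (hqFzero : qF 0 = 0)
    (qT : A → ℝ) (hqT0 : ∀ x, 0 ≤ qT x) (hqTzero : qT 0 = 0)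
    -- the approximation functional `E(t, f)` and Peetre's K-functional
    (Efn : ℝ → A → ℝ)
    (hEfn : ∀ t f, Efn t f =
      sInf {v : ℝ | ∃ g : A, g ∈ T ∧ qT g ≤ t ∧ v = qE (f - g)})
    (Kfn : A → ℝ → ℝ)
    (hKfn : ∀ f t, Kfn f t =
      sInf {v : ℝ | ∃ f₀ f₁ : A, f₁ ∈ F ∧ f = f₀ + f₁ ∧ v = qE f₀ + t * qF f₁})
    -- Jackson-type inequality
    (CJ β : ℝ) (hCJ : 0 < CJ) (hβ : 0 < β)
    (hJackson : ∀ f ∈ F, ∀ t : ℝ, 0 < t → t ^ β * Efn t f ≤ CJ * qF f)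
    (θ : ℝ) (hθ0 : 0 < θ) (hθ1 : θ < 1) :
    (∀ q : ℝ, 0 < q → ∃ c : ℝ, 0 < c ∧ ∀ f : A,
      (∫⁻ t in Ioi (0 : ℝ),
          ENNReal.ofReal ((t ^ (θ * β) * Efn t f) ^ q * t⁻¹)) ^ (1 / q) ≤
        ENNReal.ofReal c *
          (∫⁻ t in Ioi (0 : ℝ),
            ENNReal.ofReal ((t ^ (-θ) * Kfn f t) ^ q * t⁻¹)) ^ (1 / q)) ∧
    (∃ c : ℝ, 0 < c ∧ ∀ f : A,
      (⨆ t ∈ Ioi (0 : ℝ), ENNReal.ofReal (t ^ (θ * β) * Efn t f)) ≤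
        ENNReal.ofReal c *
          ⨆ t ∈ Ioi (0 : ℝ), ENNReal.ofReal (t ^ (-θ) * Kfn f t)) := by
  set C' : ℝ := CE * max 1 CJ with hC'def
  have hC1 : (1:ℝ) ≤ C' := by
    have h1 : (1:ℝ) ≤ max 1 CJ := le_max_left _ _
    nlinarith
  have hC'pos : 0 < C' := lt_of_lt_of_le one_pos hC1
  -- basic properties of Efn
  have hEne : ∀ (t : ℝ) (f : A), 0 ≤ t →
      {v : ℝ | ∃ g : A, g ∈ T ∧ qT g ≤ t ∧ v = qE (f - g)}.Nonempty := by
    intro t f ht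
    exact ⟨qE (f - 0), 0, T.zero_mem, by rw [hqTzero]; exact ht, rfl⟩
  have hEbdd : ∀ (t : ℝ) (f : A),
      BddBelow {v : ℝ | ∃ g : A, g ∈ T ∧ qT g ≤ t ∧ v = qE (f - g)} := by
    intro t f
    exact ⟨0, by rintro v ⟨g, _, _, rfl⟩; exact hqE0 _⟩
  have hEnonneg : ∀ (t : ℝ) (f : A), 0 ≤ Efn t f := by
    intro t f
    rw [hEfn]
    rcases Set.eq_empty_or_nonempty
        {v : ℝ | ∃ g : A, g ∈ T ∧ qT g ≤ t ∧ v = qE (f - g)} with h | h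
    · simp [h, Real.sInf_empty]
    · exact le_csInf h (by rintro v ⟨g, _, _, rfl⟩; exact hqE0 _)
  -- key pointwise bound : Efn t f ≤ C' * Kfn f (t ^ (-β))
  have hkey : ∀ (f : A) (t : ℝ), 0 < t → Efn t f ≤ C' * Kfn f (t ^ (-β)) := by
    intro f t ht
    set s : ℝ := t ^ (-β) with hs
    have hspos : 0 < s := Real.rpow_pos_of_pos ht _
    rw [hKfn]
    rw [← div_le_iff₀' hC'pos]
    refine le_csInf ⟨qE f + s * qF 0, f, 0, F.zero_mem, by rw [add_zero], rfl⟩ ?_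
    rintro v ⟨f₀, f₁, hf₁F, hdec, rfl⟩
    rw [div_le_iff₀' hC'pos]
    -- Step 1: Efn t f ≤ CE * (qE f₀ + Efn t f₁)
    have step1 : Efn t f ≤ CE * (qE f₀ + Efn t f₁) := by
      have h2 : (Efn t f) / CE - qE f₀ ≤ Efn t f₁ := by
        rw [hEfn t f₁]
        refine le_csInf (hEne t f₁ (le_of_lt ht)) ?_
        rintro v ⟨g, hgT, hgt, rfl⟩
        have h3 : Efn t f ≤ qE (f - g) := by
          rw [hEfn]
          exact csInf_le (hEbdd t f) ⟨g, hgT, hgt, rfl⟩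
        have h4 : qE (f - g) ≤ CE * (qE f₀ + qE (f₁ - g)) := by
          have : f - g = f₀ + (f₁ - g) := by rw [hdec]; abel
          rw [this]
          exact hqEtri _ _
        have hCEpos : 0 < CE := lt_of_lt_of_le one_pos hCE
        rw [div_sub' (ne_of_gt hCEpos), div_le_iff₀ hCEpos]
        nlinarith
      have hCEpos : 0 < CE := lt_of_lt_of_le one_pos hCE
      rw [div_sub' (ne_of_gt hCEpos), div_le_iff₀ hCEpos] at h2
      nlinarith
    -- Step 2: Jackson
    have step2 : Efn t f₁ ≤ CJ * s * qF f₁ := by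
      have hJ := hJackson f₁ hf₁F t ht
      have htb : (0:ℝ) < t ^ β := Real.rpow_pos_of_pos ht _
      have hsinv : s = (t ^ β)⁻¹ := by
        rw [hs, Real.rpow_neg (le_of_lt ht)]
      rw [hsinv]
      rw [mul_comm (t^β) (Efn t f₁)] at hJ
      calc Efn t f₁ = Efn t f₁ * t ^ β * (t ^ β)⁻¹ := by
            field_simp
        _ ≤ CJ * qF f₁ * (t ^ β)⁻¹ := by
            apply mul_le_mul_of_nonneg_right hJ (by positivity)
        _ = CJ * (t ^ β)⁻¹ * qF f₁ := by ring
    have hM : max 1 CJ > 0 := lt_of_lt_of_le one_pos (le_max_left _ _)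
    calc Efn t f ≤ CE * (qE f₀ + Efn t f₁) := step1
      _ ≤ CE * (qE f₀ + CJ * s * qF f₁) := by
          have hCEpos : 0 < CE := lt_of_lt_of_le one_pos hCE
          nlinarith
      _ ≤ C' * (qE f₀ + s * qF f₁) := by
          have hCEpos : 0 < CE := lt_of_lt_of_le one_pos hCE
          have h1 : qE f₀ ≤ max 1 CJ * qE f₀ := by
            nlinarith [hqE0 f₀, le_max_left 1 CJ]
          have h2 : CJ * s * qF f₁ ≤ max 1 CJ * (s * qF f₁) := by
            nlinarith [mul_nonneg (le_of_lt hspos) (hqF0 f₁), le_max_right 1 CJ]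
          have h3 : qE f₀ + CJ * s * qF f₁ ≤ max 1 CJ * (qE f₀ + s * qF f₁) := by
            nlinarith
          calc CE * (qE f₀ + CJ * s * qF f₁)
              ≤ CE * (max 1 CJ * (qE f₀ + s * qF f₁)) :=
                mul_le_mul_of_nonneg_left h3 (le_of_lt hCEpos)
            _ = C' * (qE f₀ + s * qF f₁) := by rw [hC'def]; ring
  -- K nonneg
  have hKnonneg : ∀ (f : A) (s : ℝ), 0 ≤ s → 0 ≤ Kfn f s := by
    intro f s hsn
    rw [hKfn]
    refine le_csInf ⟨qE f + s * qF 0, f, 0, F.zero_mem, by rw [add_zero], rfl⟩ ?_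
    rintro v ⟨f₀, f₁, hf₁F, hdec, rfl⟩
    have := hqE0 f₀; have := hqF0 f₁
    nlinarith
  -- pointwise : t^{θβ} Efn t f ≤ C' * s^{-θ} Kfn f s,  s = t^{-β}
  have hpt : ∀ (f : A) (t : ℝ), 0 < t →
      t ^ (θ * β) * Efn t f ≤ C' * ((t ^ (-β)) ^ (-θ) * Kfn f (t ^ (-β))) := by
    intro f t ht
    have hexp : (t ^ (-β)) ^ (-θ) = t ^ (θ * β) := by
      rw [← Real.rpow_mul (le_of_lt ht)]
      ring_nf
    rw [hexp]
    have h1 := hkey f t ht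
    have h2 : (0:ℝ) < t ^ (θ * β) := Real.rpow_pos_of_pos ht _
    nlinarith
  constructor
  · -- integral case
    intro q hq
    refine ⟨(C' ^ q / β) ^ (1/q), Real.rpow_pos_of_pos (by positivity) _, fun f => ?_⟩
    set G : ℝ → ℝ≥0∞ := fun s => ENNReal.ofReal ((s ^ (-θ) * Kfn f s) ^ q * s⁻¹) with hG
    have hbound : ∀ t ∈ Ioi (0:ℝ),
        ENNReal.ofReal ((t ^ (θ * β) * Efn t f) ^ q * t⁻¹) ≤
          ENNReal.ofReal (C' ^ q / β) *
            (ENNReal.ofReal (β * t ^ (-β - 1)) * G (t ^ (-β))) := by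
      intro t ht
      have ht' : (0:ℝ) < t := ht
      set s : ℝ := t ^ (-β) with hsdef
      have hspos : 0 < s := Real.rpow_pos_of_pos ht' _
      have hKn : 0 ≤ Kfn f s := hKnonneg f s (le_of_lt hspos)
      have hXn : 0 ≤ s ^ (-θ) * Kfn f s := by positivity
      rw [hG]
      rw [← ENNReal.ofReal_mul (by positivity), ← ENNReal.ofReal_mul (by positivity)]
      apply ENNReal.ofReal_le_ofReal
      -- real inequality
      have hEq : C' ^ q / β * (β * t ^ (-β - 1) * ((s ^ (-θ) * Kfn f s) ^ q * s⁻¹)) =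
          C' ^ q * (s ^ (-θ) * Kfn f s) ^ q * t⁻¹ := by
        have hsinv : s⁻¹ = t ^ β := by
          rw [hsdef, Real.rpow_neg (le_of_lt ht'), inv_inv]
        have htt : t ^ (-β - 1) * t ^ β = t⁻¹ := by
          rw [← Real.rpow_add ht', show -β - 1 + β = -1 by ring, Real.rpow_neg_one]
        rw [hsinv]
        have hββ : C' ^ q / β * β = C' ^ q := div_mul_cancel₀ _ (ne_of_gt hβ)
        rw [show C' ^ q / β * (β * t ^ (-β - 1) * ((s ^ (-θ) * Kfn f s) ^ q * t ^ β)) =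
            C' ^ q / β * β * (t ^ (-β - 1) * t ^ β * (s ^ (-θ) * Kfn f s) ^ q) from by ring,
          hββ, htt]
        ring
      rw [mul_assoc] at hEq ⊢
      rw [hEq]
      have hmain : (t ^ (θ * β) * Efn t f) ^ q ≤ C' ^ q * (s ^ (-θ) * Kfn f s) ^ q := by
        rw [← Real.mul_rpow (le_of_lt hC'pos) hXn]
        apply Real.rpow_le_rpow _ _ (le_of_lt hq)
        · have := hEnonneg t f
          positivity
        · exact hpt f t ht'
      have htinv : (0:ℝ) ≤ t⁻¹ := by positivity
      calc (t ^ (θ * β) * Efn t f) ^ q * t⁻¹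
          ≤ C' ^ q * (s ^ (-θ) * Kfn f s) ^ q * t⁻¹ :=
            mul_le_mul_of_nonneg_right hmain htinv
        _ = _ := by ring
    calc (∫⁻ t in Ioi (0:ℝ), ENNReal.ofReal ((t ^ (θ * β) * Efn t f) ^ q * t⁻¹)) ^ (1/q)
        ≤ (∫⁻ t in Ioi (0:ℝ), ENNReal.ofReal (C' ^ q / β) *
            (ENNReal.ofReal (β * t ^ (-β - 1)) * G (t ^ (-β)))) ^ (1/q) := by
          apply ENNReal.rpow_le_rpow _ (by positivity)
          exact lintegral_mono_ae ((ae_restrict_iff' measurableSet_Ioi).2 (ae_of_all _ hbound))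
      _ = (ENNReal.ofReal (C' ^ q / β) *
            ∫⁻ t in Ioi (0:ℝ), ENNReal.ofReal (β * t ^ (-β - 1)) * G (t ^ (-β))) ^ (1/q) := by
          rw [lintegral_const_mul' _ _ ENNReal.ofReal_ne_top]
      _ = (ENNReal.ofReal (C' ^ q / β) * ∫⁻ s in Ioi (0:ℝ), G s) ^ (1/q) := by
          rw [← my_cov hβ G]
      _ = ENNReal.ofReal ((C' ^ q / β) ^ (1/q)) * (∫⁻ s in Ioi (0:ℝ), G s) ^ (1/q) := by
          rw [ENNReal.mul_rpow_of_nonneg _ _ (by positivity),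
            ← ENNReal.ofReal_rpow_of_pos (by positivity)]
  · -- sup case
    refine ⟨C', hC'pos, fun f => ?_⟩
    refine iSup₂_le fun t ht => ?_
    have ht' : (0:ℝ) < t := ht
    have hspos : (0:ℝ) < t ^ (-β) := Real.rpow_pos_of_pos ht' _
    have hKn : 0 ≤ Kfn f (t ^ (-β)) := hKnonneg f _ (le_of_lt hspos)
    calc ENNReal.ofReal (t ^ (θ * β) * Efn t f)
        ≤ ENNReal.ofReal (C' * ((t ^ (-β)) ^ (-θ) * Kfn f (t ^ (-β)))) :=
          ENNReal.ofReal_le_ofReal (hpt f t ht')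
      _ = ENNReal.ofReal C' * ENNReal.ofReal ((t ^ (-β)) ^ (-θ) * Kfn f (t ^ (-β))) :=
          ENNReal.ofReal_mul (le_of_lt hC'pos)
      _ ≤ ENNReal.ofReal C' * ⨆ s ∈ Ioi (0:ℝ), ENNReal.ofReal (s ^ (-θ) * Kfn f s) := by
          apply mul_le_mul_right
          exact le_iSup₂ (f := fun s (_ : s ∈ Ioi (0:ℝ)) =>
            ENNReal.ofReal (s ^ (-θ) * Kfn f s)) (t ^ (-β)) hspos
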